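/- arXiv:2408.03406 — 3 statements merged into one kernel-verified Lean document; each statement's English description precedes it below -/
import Mathlib

section
/- For any r₀-graph F with r₀ ≥ 2 and |F| ≥ 2, and any integer r ≥ r₀, one has 1/d_r(F^{(r)}) = r − r₀ + 1/d_{r₀}(F). In particular, if r > r₀ then d_r(F^{(r)}) < 1/(r−r₀). -/
open Finset Filter

section Defs

variable {α β : Type*}

/-- `H` is `r`-uniform: every edge has exactly `r` vertices. -/
def IsUniform (r : ℕ) (H : Finset (Finset α)) : Prop := ∀ e ∈ H, e.card = r

/-- The vertex set (support) of a hypergraph given by its edge set. -/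
def verts [DecidableEq α] (H : Finset (Finset α)) : Finset α := H.sup id

/-- The degree of a set `S` of vertices in `H`: the number of edges containing `S`. -/
def degOf [DecidableEq α] (H : Finset (Finset α)) (S : Finset α) : ℕ :=
  (H.filter fun e => S ⊆ e).card

/-- `Δ_i(H)`: the maximum degree over vertex sets of size `i`. -/
def maxDeg [DecidableEq α] (H : Finset (Finset α)) (i : ℕ) : ℕ :=
  ((verts H).powersetCard i).sup fun S => degOf H S

/-- `c` is the set of edges of a copy of `F` inside `H`. -/
def IsCopy [DecidableEq β] [DecidableEq α] (F : Finset (Finset β)) (H : Finset (Finset α))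
    (c : Finset (Finset α)) : Prop :=
  ∃ φ : β → α, Set.InjOn φ ↑(verts F) ∧ (∀ e ∈ F, e.image φ ∈ H) ∧
    c = F.image fun e => e.image φ

/-- `H` contains no copy of `F`. -/
def IsFree [DecidableEq β] [DecidableEq α] (F : Finset (Finset β)) (H : Finset (Finset α)) :
    Prop :=
  ∀ c, ¬ IsCopy F H c

/-- The Turán number `ex(n, F)` over `r`-uniform host graphs on `n` vertices. -/
noncomputable def exTuran [DecidableEq β] (r n : ℕ) (F : Finset (Finset β)) : ℕ :=
  sSup {m : ℕ | ∃ H : Finset (Finset (Fin n)), IsUniform r H ∧ IsFree F H ∧ H.card = m}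

/-- The relative Turán number `ex(G, F)`: the largest number of edges of an `F`-free
subgraph of `G`. -/
noncomputable def exIn [DecidableEq β] [DecidableEq α] (F : Finset (Finset β))
    (G : Finset (Finset α)) : ℕ :=
  sSup {m : ℕ | ∃ H ⊆ G, IsFree F H ∧ H.card = m}

/-- `F` is `(M, γ, τ)`-balanced: every `n`-vertex `m`-edge `r`-graph `H` with `n`
sufficiently large and `m ≥ M(n)` carries a nonempty collection `𝓗` of copies of `F`
with `Δ_i(𝓗) ≤ (γ(n)|𝓗|/m) (τ(n,m)/m)^(i-1)` for `1 ≤ i ≤ |F|`. -/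
def IsBalanced [DecidableEq β] (r : ℕ) (F : Finset (Finset β)) (M γ : ℕ → ℝ)
    (τ : ℝ → ℝ → ℝ) : Prop :=
  ∃ N : ℕ, ∀ n : ℕ, N ≤ n → ∀ m : ℕ, M n ≤ (m : ℝ) →
    ∀ H : Finset (Finset (Fin n)), IsUniform r H → H.card = m →
      ∃ 𝓗 : Finset (Finset (Finset (Fin n))), 𝓗.Nonempty ∧ (∀ c ∈ 𝓗, IsCopy F H c) ∧
        ∀ i : ℕ, 1 ≤ i → i ≤ F.card →
          (maxDeg 𝓗 i : ℝ) ≤ γ n * 𝓗.card / m * (τ n m / m) ^ (i - 1)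

/-- The `r`-expansion `F^{(r)}`: insert `r - r₀` fresh vertices into each edge,
all distinct from each other and from the original vertices. -/
def expansion [DecidableEq β] (r : ℕ) (F : Finset (Finset β)) :
    Finset (Finset (β ⊕ (Finset β × ℕ))) :=
  F.image fun e =>
    e.image Sum.inl ∪ (Finset.range (r - e.card)).image fun k => Sum.inr (e, k)

/-- `T` is a tight `r`-tree: its edges can be ordered so that each new edge consists of a
brand new vertex together with an `(r-1)`-subset of an earlier edge. -/
def IsTightTree [DecidableEq α] (r : ℕ) (T : Finset (Finset α)) : Prop :=
  IsUniform r T ∧ ∃ l : List (Finset α), l.Nodup ∧ l.toFinset = T ∧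
    ∀ (i : ℕ) (hi : i < l.length), 1 ≤ i →
      ∃ v ∈ l.get ⟨i, hi⟩, v ∉ (l.take i).foldr (· ∪ ·) ∅ ∧
        ∃ (s : ℕ) (hs : s < l.length), s < i ∧ (l.get ⟨i, hi⟩).erase v ⊆ l.get ⟨s, hs⟩

/-- `F` is a spanning subgraph of a tight `r`-tree. -/
def IsSpanningSubgraphOfTightTree [DecidableEq α] (r : ℕ) (F : Finset (Finset α)) : Prop :=
  ∃ T : Finset (Finset α), IsTightTree r T ∧ F ⊆ T ∧ verts T = verts F

/-- The `k`-shadow of a hypergraph: all `k`-sets contained in some edge. -/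
def kshadow [DecidableEq α] (k : ℕ) (T : Finset (Finset α)) : Finset (Finset α) :=
  T.sup fun e => e.powersetCard k

/-- The `r`-density `d_r(F)` of a hypergraph with at least two edges. -/
noncomputable def density [DecidableEq β] (r : ℕ) (F : Finset (Finset β)) : ℝ :=
  sSup {x : ℝ | ∃ F' ∈ F.powerset, 2 ≤ F'.card ∧
    x = ((F'.card : ℝ) - 1) / ((verts F').card - r)}

open scoped Classical in
/-- The probability that the binomial random `r`-graph `G^r_{n,p}` lies in the event `E`. -/
noncomputable def probRandom (n r : ℕ) (p : ℝ) (E : Finset (Finset (Fin n)) → Prop) : ℝ :=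
  ∑ G ∈ ((Finset.univ : Finset (Fin n)).powersetCard r).powerset,
    if E G then
      p ^ G.card * (1 - p) ^ (((Finset.univ : Finset (Fin n)).powersetCard r).card - G.card)
    else 0

/-- The events `E n` hold asymptotically almost surely in `G^r_{n, p n}`. -/
def AAS (r : ℕ) (p : ℕ → ℝ) (E : ∀ n : ℕ, Finset (Finset (Fin n)) → Prop) : Prop :=
  Tendsto (fun n => probRandom n r (p n) (E n)) atTop (nhds 1)

/-- `f ≪ g`, i.e. `f n / g n → 0`. -/
def SmallO (f g : ℕ → ℝ) : Prop := Tendsto (fun n => f n / g n) atTop (nhds 0)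

/-- The complete bipartite graph `K_{s,t}` as a `2`-graph. -/
def completeBipartite (s t : ℕ) : Finset (Finset (Fin s ⊕ Fin t)) :=
  (Finset.univ : Finset (Fin s × Fin t)).image fun vw => {Sum.inl vw.1, Sum.inr vw.2}

/-- The `j`-th vertex on the `i`-th path of the theta graph `θ_{a,b}`. -/
def thetaVertex (a b : ℕ) (i : Fin a) (j : ℕ) : Fin 2 ⊕ (Fin a × Fin (b - 1)) :=
  if _hj : j = 0 then Sum.inl 0
  else if hb : j < b then Sum.inr (i, ⟨j - 1, by omega⟩) else Sum.inl 1

/-- The theta graph `θ_{a,b}`: `a` internally disjoint paths of length `b`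
between two common endpoints. -/
def thetaGraph (a b : ℕ) : Finset (Finset (Fin 2 ⊕ (Fin a × Fin (b - 1)))) :=
  (Finset.univ ×ˢ Finset.range b).image fun p : Fin a × ℕ =>
    {thetaVertex a b p.1 p.2, thetaVertex a b p.1 (p.2 + 1)}

end Defs


section AuxStmt11

variable {β : Type*} [DecidableEq β]

/-- One expanded edge. -/
def expandEdge (r : ℕ) (e : Finset β) : Finset (β ⊕ (Finset β × ℕ)) :=
  e.image Sum.inl ∪ (Finset.range (r - e.card)).image fun k => Sum.inr (e, k)

lemma expansion_eq_image (r : ℕ) (F : Finset (Finset β)) :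
    expansion r F = F.image (expandEdge r) := rfl

lemma inl_mem_expandEdge {r : ℕ} {e : Finset β} {a : β} :
    Sum.inl a ∈ expandEdge r e ↔ a ∈ e := by
  simp [expandEdge]

lemma expandEdge_injective (r : ℕ) : Function.Injective (expandEdge r (β := β)) := by
  intro e₁ e₂ h
  ext a
  rw [← inl_mem_expandEdge (r := r), h, inl_mem_expandEdge]

lemma card_expandEdge {r r₀ : ℕ} (hr : r₀ ≤ r) {e : Finset β} (he : e.card = r₀) :
    (expandEdge r e).card = r := by
  have hdisj : Disjoint (e.image Sum.inl)
      ((Finset.range (r - e.card)).image fun k => Sum.inr (e, k)) := by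
    simp [Finset.disjoint_left]
  have hinj : Function.Injective (fun k : ℕ => (Sum.inr (e, k) : β ⊕ (Finset β × ℕ))) := by
    intro x y hxy; simpa using hxy
  rw [expandEdge, Finset.card_union_of_disjoint hdisj,
    Finset.card_image_of_injective _ Sum.inl_injective,
    Finset.card_image_of_injective _ hinj, Finset.card_range, he]
  omega

lemma verts_image_expandEdge {r r₀ : ℕ} (hr : r₀ ≤ r) {S : Finset (Finset β)}
    (hU : ∀ e ∈ S, e.card = r₀) :
    (verts (S.image (expandEdge r))).card = (verts S).card + S.card * (r - r₀) := by
  classical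
  have h1 : verts (S.image (expandEdge r)) =
      (verts S).image Sum.inl ∪
        S.biUnion fun e => (Finset.range (r - e.card)).image fun k => Sum.inr (e, k) := by
    ext x
    simp only [verts, Finset.mem_sup, Finset.mem_image, Finset.mem_union, Finset.mem_biUnion,
      id_eq]
    constructor
    · rintro ⟨f, ⟨e, he, rfl⟩, hx⟩
      rcases Finset.mem_union.mp hx with h | h
      · rcases Finset.mem_image.mp h with ⟨a, ha, rfl⟩
        exact Or.inl ⟨a, ⟨e, he, ha⟩, rfl⟩
      · exact Or.inr ⟨e, he, by simpa using h⟩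
    · rintro (⟨a, ⟨e, he, ha⟩, rfl⟩ | ⟨e, he, hx⟩)
      · exact ⟨_, ⟨e, he, rfl⟩, Finset.mem_union_left _ (Finset.mem_image_of_mem _ ha)⟩
      · exact ⟨_, ⟨e, he, rfl⟩, Finset.mem_union_right _ (by simpa using hx)⟩
  have hdisj : Disjoint ((verts S).image Sum.inl)
      (S.biUnion fun e => (Finset.range (r - e.card)).image fun k => Sum.inr (e, k)) := by
    simp [Finset.disjoint_left]
  have hpair : ∀ e₁ ∈ S, ∀ e₂ ∈ S, e₁ ≠ e₂ →
      Disjoint ((Finset.range (r - e₁.card)).image fun k => (Sum.inr (e₁, k) : β ⊕ (Finset β × ℕ)))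
        ((Finset.range (r - e₂.card)).image fun k => Sum.inr (e₂, k)) := by
    intro e₁ _ e₂ _ hne
    simp only [Finset.disjoint_left, Finset.mem_image, Finset.mem_range]
    rintro x ⟨k, _, rfl⟩ ⟨k', _, h⟩
    exact hne (by injection (Sum.inr.inj h) with h1 h2; exact h1.symm) |>.elim
  rw [h1, Finset.card_union_of_disjoint hdisj,
    Finset.card_image_of_injective _ Sum.inl_injective, Finset.card_biUnion hpair]
  congr 1
  have : ∀ e ∈ S, ((Finset.range (r - e.card)).image
      fun k => (Sum.inr (e, k) : β ⊕ (Finset β × ℕ))).card = r - r₀ := by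
    intro e he
    have hinj : Function.Injective (fun k : ℕ => (Sum.inr (e, k) : β ⊕ (Finset β × ℕ))) := by
      intro x y hxy; simpa using hxy
    rw [Finset.card_image_of_injective _ hinj, Finset.card_range, hU e he]
  rw [Finset.sum_congr rfl this, Finset.sum_const, smul_eq_mul]

lemma subset_expansion_eq_image {r : ℕ} {F : Finset (Finset β)}
    {F'' : Finset (Finset (β ⊕ (Finset β × ℕ)))} (h : F'' ⊆ expansion r F) :
    ∃ S ⊆ F, F'' = S.image (expandEdge r) := by
  classical
  refine ⟨F.filter fun e => expandEdge r e ∈ F'', Finset.filter_subset _ _, ?_⟩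
  ext x
  simp only [Finset.mem_image, Finset.mem_filter]
  constructor
  · intro hx
    obtain ⟨e, he, rfl⟩ := Finset.mem_image.mp (by exact h hx)
    exact ⟨e, ⟨he, hx⟩, rfl⟩
  · rintro ⟨e, ⟨he, hmem⟩, rfl⟩
    exact hmem

lemma verts_card_ge {r₀ : ℕ} {S : Finset (Finset β)} (hU : ∀ e ∈ S, e.card = r₀)
    (h2 : 2 ≤ S.card) : r₀ + 1 ≤ (verts S).card := by
  obtain ⟨e₁, he₁, e₂, he₂, hne⟩ := Finset.one_lt_card.mp h2
  have hsub : e₁ ∪ e₂ ⊆ verts S :=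
    Finset.union_subset (Finset.le_sup (f := id) he₁) (Finset.le_sup (f := id) he₂)
  have hc1 : e₁.card = r₀ := hU _ he₁
  have hc2 : e₂.card = r₀ := hU _ he₂
  have hkey : r₀ + 1 ≤ (e₁ ∪ e₂).card := by
    by_contra hlt
    push_neg at hlt
    have h₁ : e₁ = e₁ ∪ e₂ :=
      Finset.eq_of_subset_of_card_le Finset.subset_union_left (by omega)
    have h₂ : e₂ ⊆ e₁ := h₁ ▸ Finset.subset_union_right
    exact hne (Finset.eq_of_subset_of_card_le h₂ (by omega)).symm
  exact hkey.trans (Finset.card_le_card hsub)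

end AuxStmt11

/-- the density of an expansion. -/
theorem stmt_11 {β : Type*} [DecidableEq β] (r₀ r : ℕ) (hr₀ : 2 ≤ r₀) (hr : r₀ ≤ r)
    (F : Finset (Finset β)) (hF : IsUniform r₀ F) (hF2 : 2 ≤ F.card) :
    1 / density r (expansion r F) = (r : ℝ) - (r₀ : ℝ) + 1 / density r₀ F ∧
    (r₀ < r → density r (expansion r F) < 1 / ((r : ℝ) - (r₀ : ℝ))) := by
  classical
  set c : ℝ := (r : ℝ) - (r₀ : ℝ) with hc
  have hc0 : 0 ≤ c := by
    rw [hc, sub_nonneg]; exact_mod_cast hr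
  set D₀ : Set ℝ := {x : ℝ | ∃ F' ∈ F.powerset, 2 ≤ F'.card ∧
    x = ((F'.card : ℝ) - 1) / (((verts F').card : ℝ) - (r₀ : ℝ))} with hD₀
  set Dr : Set ℝ := {x : ℝ | ∃ F' ∈ (expansion r F).powerset, 2 ≤ F'.card ∧
    x = ((F'.card : ℝ) - 1) / (((verts F').card : ℝ) - (r : ℝ))} with hDr
  have hdensF : density r₀ F = sSup D₀ := rfl
  have hdensE : density r (expansion r F) = sSup Dr := rfl
  -- finiteness of D₀
  have hD₀fin : D₀.Finite := by
    apply Set.Finite.subset ((F.powerset.finite_toSet).image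
      fun F' => ((F'.card : ℝ) - 1) / (((verts F').card : ℝ) - (r₀ : ℝ)))
    rintro x ⟨F', hF', _, rfl⟩
    exact ⟨F', hF', rfl⟩
  have hD₀ne : D₀.Nonempty := ⟨_, F, Finset.mem_powerset_self F, hF2, rfl⟩
  -- the supremum is attained
  set x₀ : ℝ := sSup D₀ with hx₀
  have hx₀mem : x₀ ∈ D₀ := hD₀ne.csSup_mem hD₀fin
  have hx₀ub : ∀ y ∈ D₀, y ≤ x₀ := fun y hy => le_csSup hD₀fin.bddAbove hy
  -- facts about denominators
  have hverts : ∀ S : Finset (Finset β), S ⊆ F → 2 ≤ S.card →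
      (1 : ℝ) ≤ ((verts S).card : ℝ) - (r₀ : ℝ) := by
    intro S hS h2
    have := verts_card_ge (fun e he => hF e (hS he)) h2
    have : (r₀ : ℝ) + 1 ≤ ((verts S).card : ℝ) := by exact_mod_cast this
    linarith
  obtain ⟨S₀, hS₀F, hS₀2, hx₀eq⟩ := hx₀mem
  rw [Finset.mem_powerset] at hS₀F
  set A₀ : ℝ := (S₀.card : ℝ) - 1 with hA₀
  set B₀ : ℝ := ((verts S₀).card : ℝ) - (r₀ : ℝ) with hB₀
  have hA₀1 : (1 : ℝ) ≤ A₀ := by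
    rw [hA₀]; have : (2 : ℝ) ≤ (S₀.card : ℝ) := by exact_mod_cast hS₀2
    linarith
  have hB₀1 : (1 : ℝ) ≤ B₀ := hverts S₀ hS₀F hS₀2
  have hx₀pos : 0 < x₀ := by
    rw [hx₀eq]; exact div_pos (by linarith) (by linarith)
  have hden_pos : 0 < c * x₀ + 1 := by positivity
  -- the value of an expanded subgraph
  have hval : ∀ S : Finset (Finset β), S ⊆ F → 2 ≤ S.card →
      ((S.image (expandEdge r)).card : ℝ) = (S.card : ℝ) ∧
      (((verts (S.image (expandEdge r))).card : ℝ) - (r : ℝ)) =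
        (((verts S).card : ℝ) - (r₀ : ℝ)) + ((S.card : ℝ) - 1) * c := by
    intro S hS h2
    have hcard : (S.image (expandEdge r)).card = S.card :=
      Finset.card_image_of_injective _ (expandEdge_injective r)
    have hv := verts_image_expandEdge hr (fun e he => hF e (hS he)) (S := S)
    refine ⟨by exact_mod_cast hcard, ?_⟩
    rw [hv]
    have hcast : ((r - r₀ : ℕ) : ℝ) = c := by
      rw [hc, Nat.cast_sub hr]
    push_cast
    rw [hcast]; ring
  -- every element of Dr is ≤ x₀ / (c * x₀ + 1), and the bound is attained
  have hA : ∀ y ∈ Dr, y ≤ x₀ / (c * x₀ + 1) := by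
    rintro y ⟨F'', hF''sub, hF''2, rfl⟩
    rw [Finset.mem_powerset] at hF''sub
    obtain ⟨S, hSF, rfl⟩ := subset_expansion_eq_image hF''sub
    have hcard : (S.image (expandEdge r)).card = S.card :=
      Finset.card_image_of_injective _ (expandEdge_injective r)
    have hS2 : 2 ≤ S.card := by rw [← hcard]; exact hF''2
    obtain ⟨h1, h2⟩ := hval S hSF hS2
    set A : ℝ := (S.card : ℝ) - 1 with hA'
    set B : ℝ := ((verts S).card : ℝ) - (r₀ : ℝ) with hB'
    have hA1 : (1 : ℝ) ≤ A := by
      rw [hA']; have : (2 : ℝ) ≤ (S.card : ℝ) := by exact_mod_cast hS2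
      linarith
    have hB1 : (1 : ℝ) ≤ B := hverts S hSF hS2
    have hxS : A / B ≤ x₀ := hx₀ub _ ⟨S, Finset.mem_powerset.mpr hSF, hS2, rfl⟩
    have hAB : A ≤ x₀ * B := by
      rw [div_le_iff₀ (by linarith)] at hxS; linarith
    rw [h1, h2]
    rw [div_le_div_iff₀ (by nlinarith) hden_pos]
    nlinarith
  have hB : x₀ / (c * x₀ + 1) ∈ Dr := by
    refine ⟨S₀.image (expandEdge r), ?_, ?_, ?_⟩
    · rw [Finset.mem_powerset, expansion_eq_image]
      exact Finset.image_subset_image hS₀F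
    · rw [Finset.card_image_of_injective _ (expandEdge_injective r)]; exact hS₀2
    · obtain ⟨h1, h2⟩ := hval S₀ hS₀F hS₀2
      rw [h1, h2, hx₀eq]
      have hB₀ne : B₀ ≠ 0 := by linarith
      have h3 : c * (A₀ / B₀) + 1 ≠ 0 := by
        have hpos : 0 ≤ c * (A₀ / B₀) := by positivity
        linarith
      have h4 : B₀ + A₀ * c ≠ 0 := by nlinarith
      rw [div_div]
      congr 1
      field_simp
      ring
  have hsSup : sSup Dr = x₀ / (c * x₀ + 1) :=
    le_antisymm (csSup_le ⟨_, hB⟩ hA) (le_csSup ⟨_, hA⟩ hB)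
  have hx₀ne : x₀ ≠ 0 := ne_of_gt hx₀pos
  have hdenne : c * x₀ + 1 ≠ 0 := ne_of_gt hden_pos
  constructor
  · rw [hdensE, hdensF, hsSup, one_div_div]
    field_simp
  · intro hlt
    have hc1 : (1 : ℝ) ≤ c := by
      rw [hc]; have : (r₀ : ℝ) + 1 ≤ (r : ℝ) := by exact_mod_cast hlt
      linarith
    have hcpos : (0 : ℝ) < c := by linarith
    rw [hdensE, hsSup]
    rw [div_lt_div_iff₀ hden_pos hcpos]
    linarith [mul_comm x₀ c]
end

section
/- Let F be a k-graph and r₀ ≥ k an integer such that there exists a tight r₀-tree T' whose k-shadow contains F as a spanning subgraph. Then for every r ≥ r₀ there exists a tight r-tree T which contains the expansion F^{(r)} as a spanning subgraph. -/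
open Finset Filter

open Finset

namespace Stmt12Aux

variable {α β : Type*} [DecidableEq α] [DecidableEq β]

/-- Union of a list of finsets. -/
def LU (l : List (Finset α)) : Finset α := l.foldr (· ∪ ·) ∅

lemma LU_nil : LU ([] : List (Finset α)) = ∅ := rfl

lemma LU_cons (a : Finset α) (l : List (Finset α)) : LU (a :: l) = a ∪ LU l := rfl

lemma mem_LU_iff {x : α} {l : List (Finset α)} : x ∈ LU l ↔ ∃ e ∈ l, x ∈ e := by
  induction l with
  | nil => simp [LU]
  | cons a t ih => simp [LU_cons, ih]

lemma subset_LU {e : Finset α} {l : List (Finset α)} (he : e ∈ l) : e ⊆ LU l :=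
  fun x hx => mem_LU_iff.2 ⟨e, he, hx⟩

lemma LU_append (l l' : List (Finset α)) : LU (l ++ l') = LU l ∪ LU l' := by
  induction l with
  | nil => simp [LU]
  | cons a t ih => simp [LU_cons, ih, union_assoc]

lemma LU_eq_sup (l : List (Finset α)) : LU l = l.toFinset.sup id := by
  induction l with
  | nil => simp [LU]
  | cons a t ih => simp [LU_cons, ih]

/-- The building-block property of the list of edges of a tight tree. -/
def GoodList (r : ℕ) (l : List (Finset α)) : Prop :=
  (∀ e ∈ l, e.card = r) ∧
    ∀ (i : ℕ) (hi : i < l.length), 1 ≤ i →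
      ∃ v ∈ l[i], v ∉ LU (l.take i) ∧ ∃ e ∈ l.take i, (l[i]'hi).erase v ⊆ e

lemma getElem_mem_take {l : List (Finset α)} {i j : ℕ} (hij : i < j) (hi : i < l.length) :
    l[i] ∈ l.take j := by
  have h1 : i < (l.take j).length := by simp [List.length_take]; omega
  have h2 : (l.take j)[i] = l[i] := List.getElem_take
  exact h2 ▸ List.getElem_mem h1

lemma good_nodup {r : ℕ} {l : List (Finset α)} (h : GoodList r l) : l.Nodup := by
  have key : ∀ i j : ℕ, (hij : i < j) → (hj : j < l.length) → l[i]'(by omega) ≠ l[j] := by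
    intro i j hij hj hEq
    obtain ⟨v, hv1, hv2, -⟩ := h.2 j hj (by omega)
    exact hv2 (subset_LU (getElem_mem_take hij (by omega)) (hEq ▸ hv1))
  rw [List.nodup_iff_injective_get]
  rintro ⟨a, ha⟩ ⟨b, hb⟩ hab
  simp only [List.get_eq_getElem] at hab
  rcases lt_trichotomy a b with hlt | heq | hgt
  · exact absurd hab (key a b hlt hb)
  · exact Fin.ext heq
  · exact absurd hab.symm (key b a hgt ha)

lemma good_tight {r : ℕ} {l : List (Finset α)} (h : GoodList r l) :
    IsTightTree r l.toFinset := by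
  refine ⟨fun e he => h.1 e (List.mem_toFinset.1 he), l, good_nodup h, rfl, ?_⟩
  intro i hi h1
  obtain ⟨v, hv1, hv2, e, he, hsub⟩ := h.2 i hi h1
  obtain ⟨s, hs, hse⟩ := List.mem_iff_getElem.1 he
  have hsi : s < i := by simp [List.length_take] at hs; omega
  have hsl : s < l.length := by simp [List.length_take] at hs; omega
  have hget : (l.take i)[s] = l[s] := List.getElem_take
  refine ⟨v, by simpa using hv1, hv2, s, hsl, hsi, ?_⟩
  simp only [List.get_eq_getElem]
  rw [← hget, hse]
  exact hsub

lemma good_snoc {r : ℕ} {l : List (Finset α)} (h : GoodList r l) {A : Finset α}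
    (hA : A ∈ l) {x v : α} (hx : x ∈ A) (hv : v ∉ LU l) :
    GoodList r (l ++ [insert v (A.erase x)]) := by
  have hvA : v ∉ A := fun h' => hv (subset_LU hA h')
  have hAr : A.card = r := h.1 A hA
  have hr1 : 1 ≤ r := hAr ▸ card_pos.2 ⟨x, hx⟩
  constructor
  · intro e he
    rcases List.mem_append.1 he with he | he
    · exact h.1 e he
    · rw [List.mem_singleton.1 he]
      rw [card_insert_of_notMem (fun h' => hvA (mem_of_mem_erase h')),
        card_erase_of_mem hx, hAr]
      omega
  · intro i hi h1
    have hlen : (l ++ [insert v (A.erase x)]).length = l.length + 1 := by simp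
    by_cases hil : i < l.length
    · have htake : (l ++ [insert v (A.erase x)]).take i = l.take i :=
        List.take_append_of_le_length (by omega)
      have hget : (l ++ [insert v (A.erase x)])[i] = l[i] := List.getElem_append_left hil
      rw [htake, hget]
      exact h.2 i hil h1
    · have hie : i = l.length := by omega
      have hget : (l ++ [insert v (A.erase x)])[i] = insert v (A.erase x) :=
        List.getElem_concat_length hie hi
      have htake : (l ++ [insert v (A.erase x)]).take i = l := by
        rw [hie]; exact List.take_left
      rw [htake, hget]
      refine ⟨v, mem_insert_self _ _, hv, A, hA, ?_⟩
      rw [Finset.erase_insert (fun h' => hvA (mem_of_mem_erase h'))]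
      exact erase_subset _ _

lemma good_chain {r : ℕ} (ws : List α) : ∀ (l : List (Finset α)), GoodList r l →
    ∀ A ∈ l, ∀ D ⊆ A, ws.Nodup → (∀ w ∈ ws, w ∉ LU l) → D.card = ws.length →
    ∃ l', GoodList r l' ∧ (∀ e ∈ l, e ∈ l') ∧ LU l' = LU l ∪ ws.toFinset ∧
      ((A \ D) ∪ ws.toFinset) ∈ l' := by
  induction ws with
  | nil =>
    intro l hl A hA D hD _ _ hcard
    have : D = ∅ := card_eq_zero.1 hcard
    subst this
    exact ⟨l, hl, fun e he => he, by simp, by simpa using hA⟩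
  | cons w ws ih =>
    intro l hl A hA D hD hnd hfresh hcard
    have hwl : w ∉ LU l := hfresh w List.mem_cons_self
    have hwA : w ∉ A := fun h' => hwl (subset_LU hA h')
    obtain ⟨d, hd⟩ : D.Nonempty := card_pos.1 (by rw [hcard]; simp)
    have hdA : d ∈ D → d ∈ A := fun h' => hD h'
    have hdA' : d ∈ A := hD hd
    set A' := insert w (A.erase d) with hA'
    have hsnoc : GoodList r (l ++ [A']) := good_snoc hl hA hdA' hwl
    have hA'mem : A' ∈ l ++ [A'] := List.mem_append.2 (Or.inr (List.mem_singleton.2 rfl))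
    have hLU1 : LU (l ++ [A']) = LU l ∪ A' := by rw [LU_append]; simp [LU]
    have hD' : D.erase d ⊆ A' := by
      intro y hy
      rcases mem_erase.1 hy with ⟨hyd, hyD⟩
      exact mem_insert_of_mem (mem_erase.2 ⟨hyd, hD hyD⟩)
    have hfresh' : ∀ w' ∈ ws, w' ∉ LU (l ++ [A']) := by
      intro w' hw' hmem
      rcases mem_union.1 (hLU1 ▸ hmem) with h' | h'
      · exact hfresh w' (List.mem_cons_of_mem _ hw') h'
      · rcases mem_insert.1 h' with h' | h'
        · exact (List.nodup_cons.1 hnd).1 (h' ▸ hw')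
        · exact hfresh w' (List.mem_cons_of_mem _ hw') (subset_LU hA (mem_of_mem_erase h'))
    have hcard' : (D.erase d).card = ws.length := by
      rw [card_erase_of_mem hd, hcard]; simp
    obtain ⟨l', hl', hmem', hLU', hfin'⟩ :=
      ih (l ++ [A']) hsnoc A' hA'mem (D.erase d) hD' (List.nodup_cons.1 hnd).2 hfresh' hcard'
    refine ⟨l', hl', fun e he => hmem' e (List.mem_append.2 (Or.inl he)), ?_, ?_⟩
    · rw [hLU', hLU1]
      have hA'sub : LU l ∪ A' = LU l ∪ {w} := by
        apply subset_antisymm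
        · apply union_subset subset_union_left
          intro y hy
          rcases mem_insert.1 hy with hy | hy
          · exact mem_union_right _ (mem_singleton.2 hy)
          · exact mem_union_left _ (subset_LU hA (mem_of_mem_erase hy))
        · exact union_subset subset_union_left
            (singleton_subset_iff.2 (mem_union_right _ (mem_insert_self _ _)))
      rw [hA'sub, List.toFinset_cons]
      ext y
      simp only [mem_union, mem_singleton, mem_insert]
      tauto
    · have hwd : w ≠ d := fun h' => hwA (h' ▸ hdA')
      have hwD : w ∉ D := fun h' => hwA (hD h')
      have hdw : d ≠ w := fun h' => hwA (h' ▸ hdA')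
      have heq : (A' \ D.erase d) ∪ ws.toFinset = (A \ D) ∪ (w :: ws).toFinset := by
        ext y
        by_cases hyd : y = d
        · subst hyd
          simp only [hA', mem_union, Finset.mem_sdiff, mem_insert, mem_erase, List.toFinset_cons,
            hdw, hd, hdA']
          tauto
        · by_cases hyw : y = w
          · subst hyw
            simp only [hA', mem_union, Finset.mem_sdiff, mem_insert, mem_erase, List.toFinset_cons,
              hwD, hwA]
            tauto
          · simp only [hA', mem_union, Finset.mem_sdiff, mem_insert, mem_erase, List.toFinset_cons,
              hyd, hyw]
            tauto
      rw [← heq]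
      exact hfin'

lemma good_hat {γ : Type*} [DecidableEq γ] {r₀ p : ℕ} {l : List (Finset β)}
    (h : GoodList r₀ l) (B : Finset (β ⊕ γ)) (hB : ∀ x ∈ B, ∃ y, x = Sum.inr y)
    (hBc : B.card = p) :
    GoodList (r₀ + p) (l.map fun e => e.image Sum.inl ∪ B) := by
  have hinj : Function.Injective (Sum.inl : β → β ⊕ γ) := Sum.inl_injective
  have hdisj : ∀ e : Finset β, Disjoint (e.image Sum.inl) B := by
    intro e
    rw [disjoint_left]
    rintro x hx hxB
    obtain ⟨y, hy⟩ := hB x hxB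
    obtain ⟨z, _, hz⟩ := mem_image.1 hx
    rw [hy] at hz
    exact Sum.inl_ne_inr hz
  constructor
  · intro e he
    obtain ⟨e', he', rfl⟩ := List.mem_map.1 he
    rw [card_union_of_disjoint (hdisj e'), card_image_of_injective _ hinj, h.1 e' he', hBc]
  · intro i hi h1
    have hil : i < l.length := by simpa using hi
    obtain ⟨v, hv1, hv2, e, he, hsub⟩ := h.2 i hil h1
    have hget : (l.map fun e => e.image Sum.inl ∪ B)[i] = (l[i]).image Sum.inl ∪ B :=
      List.getElem_map _
    have htake : (l.map fun e => e.image Sum.inl ∪ B).take i =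
        (l.take i).map fun e => e.image Sum.inl ∪ B := List.map_take.symm
    rw [hget, htake]
    refine ⟨Sum.inl v, mem_union_left _ (mem_image_of_mem _ hv1), ?_, ?_⟩
    · intro hmem
      obtain ⟨e', he', hxe'⟩ := mem_LU_iff.1 hmem
      obtain ⟨e'', he'', rfl⟩ := List.mem_map.1 he'
      rcases mem_union.1 hxe' with h' | h'
      · obtain ⟨y, hy, hyv⟩ := mem_image.1 h'
        rw [hinj hyv] at hy
        exact hv2 (subset_LU he'' hy)
      · obtain ⟨y, hy⟩ := hB _ h'
        exact Sum.inl_ne_inr hy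
    · refine ⟨e.image Sum.inl ∪ B, List.mem_map.2 ⟨e, he, rfl⟩, ?_⟩
      intro x hx
      rcases mem_erase.1 hx with ⟨hxv, hxm⟩
      rcases mem_union.1 hxm with h' | h'
      · obtain ⟨y, hy, rfl⟩ := mem_image.1 h'
        have : y ≠ v := fun h'' => hxv (by rw [h''])
        exact mem_union_left _ (mem_image_of_mem _ (hsub (mem_erase.2 ⟨this, hy⟩)))
      · exact mem_union_right _ h'

lemma good_chains {r : ℕ} (lF : List (Finset β)) (E A : Finset β → Finset α) :
    ∀ (l₀ : List (Finset α)), GoodList r l₀ → lF.Nodup →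
    (∀ f ∈ lF, A f ∈ l₀) → (∀ f ∈ lF, (E f).card = r) →
    (∀ f ∈ lF, ∀ x ∈ E f \ A f, x ∉ LU l₀) →
    (∀ f ∈ lF, ∀ f' ∈ lF, f ≠ f' → ∀ x ∈ E f \ A f, x ∉ E f' \ A f') →
    ∃ l', GoodList r l' ∧ (∀ e ∈ l₀, e ∈ l') ∧
      LU l' = LU l₀ ∪ LU (lF.map fun f => E f \ A f) ∧ ∀ f ∈ lF, E f ∈ l' := by
  induction lF with
  | nil =>
    intro l₀ h _ _ _ _ _
    exact ⟨l₀, h, fun e he => he, by simp [LU], by simp⟩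
  | cons f lF ih =>
    intro l₀ h hnd hA hE hfresh hpair
    have hfF : f ∈ f :: lF := List.mem_cons_self
    have hAf : A f ∈ l₀ := hA f hfF
    have hAr : (A f).card = r := h.1 _ hAf
    have hcard : (A f \ E f).card = ((E f \ A f).toList).length := by
      rw [length_toList, card_sdiff_comm (by rw [hAr, hE f hfF])]
    obtain ⟨l₁, hl₁, hmem₁, hLU₁, hfin₁⟩ :=
      good_chain ((E f \ A f).toList) l₀ h (A f) hAf (A f \ E f) (sdiff_subset)
        (nodup_toList _) (fun w hw => hfresh f hfF w (mem_toList.1 hw)) hcard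
    have hEf : E f ∈ l₁ := by
      have : (A f \ (A f \ E f)) ∪ (E f \ A f).toList.toFinset = E f := by
        rw [toList_toFinset, sdiff_sdiff_self_left]
        ext y; simp only [mem_union, mem_inter, Finset.mem_sdiff]; tauto
      exact this ▸ hfin₁
    have hLU₁' : LU l₁ = LU l₀ ∪ (E f \ A f) := by rw [hLU₁, toList_toFinset]
    obtain ⟨l', hl', hmem', hLU', hfin'⟩ := ih l₁ hl₁ (List.nodup_cons.1 hnd).2
      (fun f' hf' => hmem₁ _ (hA f' (List.mem_cons_of_mem _ hf')))
      (fun f' hf' => hE f' (List.mem_cons_of_mem _ hf'))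
      (fun f' hf' x hx hmem => by
        rcases mem_union.1 (hLU₁' ▸ hmem) with h' | h'
        · exact hfresh f' (List.mem_cons_of_mem _ hf') x hx h'
        · exact hpair f' (List.mem_cons_of_mem _ hf') f hfF
            (fun he => (List.nodup_cons.1 hnd).1 (he ▸ hf')) x hx h')
      (fun f' hf' f'' hf'' => hpair f' (List.mem_cons_of_mem _ hf') f''
        (List.mem_cons_of_mem _ hf''))
    refine ⟨l', hl', fun e he => hmem' e (hmem₁ e he), ?_, ?_⟩
    · rw [hLU', hLU₁', List.map_cons, LU_cons, union_assoc]
    · intro f' hf'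
      rcases List.mem_cons.1 hf' with hf' | hf'
      · exact hf' ▸ hmem' _ hEf
      · exact hfin' f' hf'

end Stmt12Aux

open Stmt12Aux in
/-- expansions of spanning subgraphs of shadows of tight trees are
spanning subgraphs of tight trees. -/
theorem stmt_12 {β : Type*} [DecidableEq β] (k r₀ : ℕ) (hk : k ≤ r₀)
    (F : Finset (Finset β)) (hF : IsUniform k F)
    (hT' : ∃ T' : Finset (Finset β), IsTightTree r₀ T' ∧ F ⊆ kshadow k T' ∧
      verts T' = verts F) :
    ∀ r : ℕ, r₀ ≤ r →
      ∃ T : Finset (Finset (β ⊕ (Finset β × ℕ))), IsTightTree r T ∧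
        expansion r F ⊆ T ∧ verts T = verts (expansion r F) := by
  classical
  intro r hr
  obtain ⟨T', ⟨hTu, l0, hnd0, htf0, hcond0⟩, hFsh, hveq⟩ := hT'
  by_cases hF0 : F = ∅
  · subst hF0
    refine ⟨∅, ⟨fun e he => absurd he (notMem_empty e), [], List.nodup_nil, by simp, ?_⟩,
      ?_, ?_⟩
    · intro i hi h1; simp at hi
    · simp [expansion]
    · simp [expansion]
  · obtain ⟨f₀, hf₀⟩ := Finset.nonempty_of_ne_empty hF0
    set E : Finset β → Finset (β ⊕ (Finset β × ℕ)) := fun f =>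
      f.image Sum.inl ∪ (Finset.range (r - k)).image fun j => Sum.inr (f, j) with hE_def
    set B : Finset (β ⊕ (Finset β × ℕ)) :=
      (Finset.range (r - r₀)).image fun j => Sum.inr (f₀, j) with hB_def
    set g : Finset β → Finset (β ⊕ (Finset β × ℕ)) := fun e => e.image Sum.inl ∪ B
      with hg_def
    -- a selector giving, for each `f ∈ F`, an edge of `T'` containing it
    have hsel0 : ∀ f : Finset β, ∃ h, f ∈ F → h ∈ l0 ∧ f ⊆ h := by
      intro f
      by_cases hf : f ∈ F
      · have hm := hFsh hf
        rw [kshadow, Finset.mem_sup] at hm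
        obtain ⟨h, hh, hfh⟩ := hm
        refine ⟨h, fun _ => ⟨?_, (Finset.mem_powersetCard.1 hfh).1⟩⟩
        rw [← htf0] at hh
        exact List.mem_toFinset.1 hh
      · exact ⟨∅, fun h => absurd h hf⟩
    choose sel hsel using hsel0
    set A : Finset β → Finset (β ⊕ (Finset β × ℕ)) := fun f => g (sel f) with hA_def
    have hl0ne : l0 ≠ [] := List.ne_nil_of_mem (hsel f₀ hf₀).1
    -- `GoodList r₀ l0`
    have hg0 : GoodList r₀ l0 := by
      constructor
      · intro e he
        exact hTu e (htf0 ▸ List.mem_toFinset.2 he)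
      · intro i hi h1
        obtain ⟨v, hv1, hv2, s, hs, hsi, hsub⟩ := hcond0 i hi h1
        refine ⟨v, by simpa using hv1, hv2, l0[s], getElem_mem_take hsi hs, ?_⟩
        simpa using hsub
    -- the expanded tree skeleton
    have hBcard : B.card = r - r₀ := by
      rw [hB_def, card_image_of_injective _ (fun a b hab => by simpa using hab)]
      simp
    have hg1 : GoodList r (l0.map g) := by
      have := good_hat hg0 B (fun x hx => by
        obtain ⟨j, _, hj⟩ := Finset.mem_image.1 hx
        exact ⟨(f₀, j), hj.symm⟩) hBcard
      have hrr : r₀ + (r - r₀) = r := by omega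
      rwa [hrr] at this
    have hBsubA : ∀ f, B ⊆ A f := fun f => subset_union_right
    have hgA : ∀ f ∈ F, A f ∈ l0.map g := by
      intro f hf
      exact List.mem_map.2 ⟨sel f, (hsel f hf).1, rfl⟩
    -- elements of `E f \ A f` are of the form `inr (f, j)`
    have hEA : ∀ f ∈ F, ∀ x ∈ E f \ A f, ∃ j, x = Sum.inr (f, j) := by
      intro f hf x hx
      rcases Finset.mem_sdiff.1 hx with ⟨hx1, hx2⟩
      rcases Finset.mem_union.1 hx1 with h' | h'
      · obtain ⟨y, hy, rfl⟩ := Finset.mem_image.1 h'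
        exact absurd (Finset.mem_union_left _
          (Finset.mem_image_of_mem _ ((hsel f hf).2 hy))) hx2
      · obtain ⟨j, _, hj⟩ := Finset.mem_image.1 h'
        exact ⟨j, hj.symm⟩
    have hLUmap : LU (l0.map g) = (LU l0).image Sum.inl ∪ B := by
      apply subset_antisymm
      · intro x hx
        obtain ⟨e, he, hxe⟩ := mem_LU_iff.1 hx
        obtain ⟨e', he', rfl⟩ := List.mem_map.1 he
        rcases Finset.mem_union.1 hxe with h' | h'
        · obtain ⟨y, hy, rfl⟩ := Finset.mem_image.1 h'
          exact Finset.mem_union_left _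
            (Finset.mem_image_of_mem _ (subset_LU he' hy))
        · exact Finset.mem_union_right _ h'
      · apply Finset.union_subset
        · intro x hx
          obtain ⟨y, hy, rfl⟩ := Finset.mem_image.1 hx
          obtain ⟨e, he, hye⟩ := mem_LU_iff.1 hy
          exact subset_LU (List.mem_map.2 ⟨e, he, rfl⟩)
            (Finset.mem_union_left _ (Finset.mem_image_of_mem _ hye))
        · exact (hBsubA f₀).trans (subset_LU (hgA f₀ hf₀))
    -- apply the chain construction
    obtain ⟨l', hl', hmem', hLU', hfin'⟩ := good_chains F.toList E A (l0.map g) hg1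
      F.nodup_toList
      (fun f hf => hgA f (mem_toList.1 hf))
      (fun f hf => by
        have hfF : f ∈ F := mem_toList.1 hf
        rw [hE_def]
        rw [Finset.card_union_of_disjoint, card_image_of_injective _ Sum.inl_injective,
          card_image_of_injective _ (fun a b hab => by simpa using hab), hF f hfF,
          Finset.card_range]
        · omega
        · rw [Finset.disjoint_left]
          rintro x hx1 hx2
          obtain ⟨y, _, rfl⟩ := Finset.mem_image.1 hx1
          obtain ⟨j, _, hj⟩ := Finset.mem_image.1 hx2
          exact Sum.inl_ne_inr hj.symm)
      (fun f hf x hx hmem => by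
        have hfF : f ∈ F := mem_toList.1 hf
        obtain ⟨j, rfl⟩ := hEA f hfF x hx
        rcases Finset.mem_union.1 (hLUmap ▸ hmem) with h' | h'
        · obtain ⟨y, _, hy⟩ := Finset.mem_image.1 h'
          exact Sum.inl_ne_inr hy
        · exact (Finset.mem_sdiff.1 hx).2 (hBsubA f h'))
      (fun f hf f' hf' hne x hx hx' => by
        obtain ⟨j, rfl⟩ := hEA f (mem_toList.1 hf) x hx
        obtain ⟨j', hj'⟩ := hEA f' (mem_toList.1 hf') _ hx'
        exact hne (congrArg Prod.fst (Sum.inr_injective hj')))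
    refine ⟨l'.toFinset, good_tight hl', ?_, ?_⟩
    · -- expansion is contained
      intro e he
      obtain ⟨f, hf, rfl⟩ := Finset.mem_image.1 he
      have : f.image Sum.inl ∪ (Finset.range (r - f.card)).image
          (fun j => Sum.inr (f, j)) = E f := by rw [hE_def, hF f hf]
      rw [this]
      exact List.mem_toFinset.2 (hfin' f (mem_toList.2 hf))
    · -- vertex sets agree
      have hvT : verts l'.toFinset = LU l' := (LU_eq_sup l').symm
      have hvE : verts (expansion r F) = F.sup E := by
        rw [verts, expansion, Finset.sup_image]
        refine Finset.sup_congr rfl fun f hf => ?_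
        simp only [Function.comp, id_eq, hE_def, hF f hf]
      rw [hvT, hvE, hLU', hLUmap]
      have hLUl0 : LU l0 = Finset.sup F id := by
        rw [LU_eq_sup, htf0]
        have : verts T' = T'.sup id := rfl
        rw [← this, hveq, verts]
      apply subset_antisymm
      · apply Finset.union_subset
        · apply Finset.union_subset
          · intro x hx
            obtain ⟨y, hy, rfl⟩ := Finset.mem_image.1 hx
            rw [hLUl0, Finset.mem_sup] at hy
            obtain ⟨f, hf, hyf⟩ := hy
            exact Finset.mem_sup.2 ⟨f, hf, Finset.mem_union_left _
              (Finset.mem_image_of_mem _ hyf)⟩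
          · intro x hx
            rw [hB_def] at hx
            obtain ⟨j, hj, rfl⟩ := Finset.mem_image.1 hx
            rw [Finset.mem_range] at hj
            refine Finset.mem_sup.2 ⟨f₀, hf₀, Finset.mem_union_right _ ?_⟩
            exact Finset.mem_image_of_mem _ (Finset.mem_range.2 (by omega))
        · intro x hx
          obtain ⟨e, he, hxe⟩ := mem_LU_iff.1 hx
          obtain ⟨f, hf, rfl⟩ := List.mem_map.1 he
          exact Finset.mem_sup.2 ⟨f, mem_toList.1 hf, (Finset.mem_sdiff.1 hxe).1⟩
      · intro x hx
        obtain ⟨f, hf, hxf⟩ := Finset.mem_sup.1 hx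
        have hx' := subset_LU (hfin' f (mem_toList.2 hf)) hxf
        rwa [hLU', hLUmap] at hx'
end

section
/- For all integers a ≥ 2 and b ≥ 2, the 3-expansion θ^{(3)}_{a,b} of the theta graph θ_{a,b} is a spanning subgraph of a tight 3-tree. -/
open Finset Filter

section Aux
variable {γ : Type*} [DecidableEq γ]

lemma pair_eq_cases {x y z w : γ} (h : ({x,y} : Finset γ) = {z,w}) :
    (x = z ∧ y = w) ∨ (x = w ∧ y = z) := by
  have hx : x = z ∨ x = w := by
    have : x ∈ ({z,w} : Finset γ) := h ▸ mem_insert_self x {y}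
    simpa using this
  have hw : w = x ∨ w = y := by
    have : w ∈ ({x,y} : Finset γ) := by rw [h]; simp
    simpa using this
  have hy : y = z ∨ y = w := by
    have : y ∈ ({z,w} : Finset γ) := h ▸ (by simp : y ∈ ({x,y}:Finset γ))
    simpa using this
  have hz : z = x ∨ z = y := by
    have : z ∈ ({x,y} : Finset γ) := by rw [h]; simp
    simpa using this
  rcases hx with rfl|rfl <;> rcases hy with rfl|rfl <;> tauto

lemma card3 {x y z : γ} (hxy : x ≠ y) (hxz : x ≠ z) (hyz : y ≠ z) :
    ({x,y,z} : Finset γ).card = 3 := by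
  rw [card_insert_of_notMem (by simp [hxy, hxz]), card_insert_of_notMem (by simp [hyz])]
  simp

def vertsL (l : List (Finset γ)) : Finset γ := l.foldr (· ∪ ·) ∅

lemma mem_vertsL {l : List (Finset γ)} {f : Finset γ} (hf : f ∈ l) : f ⊆ vertsL l := by
  induction l with
  | nil => simp at hf
  | cons a t ih =>
    rcases List.mem_cons.1 hf with rfl|hf
    · exact fun x hx => by simp only [vertsL, List.foldr_cons, mem_union]; exact Or.inl hx
    · exact fun x hx => by simp only [vertsL, List.foldr_cons, mem_union]; exact Or.inr (ih hf hx)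

lemma vertsL_append (l l' : List (Finset γ)) :
    vertsL (l ++ l') = vertsL l ∪ vertsL l' := by
  induction l with
  | nil => simp [vertsL]
  | cons a t ih =>
    simp only [List.cons_append, vertsL, List.foldr_cons] at ih ⊢
    rw [ih, union_assoc]

lemma vertsL_cons (e : Finset γ) (l : List (Finset γ)) :
    vertsL (e :: l) = e ∪ vertsL l := rfl

def Good (l : List (Finset γ)) : Prop :=
  ∀ (i : ℕ) (hi : i < l.length), 1 ≤ i →
      ∃ v ∈ l.get ⟨i, hi⟩, v ∉ (l.take i).foldr (· ∪ ·) ∅ ∧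
        ∃ (s : ℕ) (hs : s < l.length), s < i ∧ (l.get ⟨i, hi⟩).erase v ⊆ l.get ⟨s, hs⟩

lemma good_singleton (e : Finset γ) : Good [e] := by intro i hi h1; simp at hi; omega

lemma good_snoc {l : List (Finset γ)} {e : Finset γ} (hl : Good l) (v : γ) (hv : v ∈ e)
    (hfresh : v ∉ vertsL l) (f : Finset γ) (hf : f ∈ l) (hsub : e.erase v ⊆ f) :
    Good (l ++ [e]) := by
  intro i hi h1i
  have hlen : (l ++ [e]).length = l.length + 1 := by simp
  rcases lt_or_eq_of_le (Nat.lt_succ_iff.1 (by omega : i < l.length + 1)) with hlt | heq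
  · obtain ⟨w, hw, hwf, s, hs, hsi, hss⟩ := hl i hlt h1i
    have hget : (l ++ [e]).get ⟨i, hi⟩ = l.get ⟨i, hlt⟩ := by
      simp [List.get_eq_getElem, List.getElem_append_left hlt]
    have htake : (l ++ [e]).take i = l.take i :=
      List.take_append_of_le_length (by omega)
    refine ⟨w, by rw [hget]; exact hw, by rw [htake]; exact hwf, s, by omega, hsi, ?_⟩
    have hgets : (l ++ [e]).get ⟨s, by omega⟩ = l.get ⟨s, hs⟩ := by
      simp [List.get_eq_getElem, List.getElem_append_left hs]
    rw [hget, hgets]; exact hss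
  · subst heq
    have hget : (l ++ [e]).get ⟨l.length, hi⟩ = e := by
      simp [List.get_eq_getElem]
    have htake : (l ++ [e]).take l.length = l := by simp
    obtain ⟨s, hsget⟩ := List.get_of_mem hf
    refine ⟨v, by rw [hget]; exact hv, by rw [htake]; exact hfresh, s, by omega,
      by omega, ?_⟩
    have hgets : (l ++ [e]).get ⟨s, by omega⟩ = l.get s := by
      simp [List.get_eq_getElem, List.getElem_append_left s.isLt]
    rw [hget, hgets, hsget]; exact hsub

lemma good_nodup {l : List (Finset γ)} (hl : Good l) : l.Nodup := by
  rw [List.Nodup, List.pairwise_iff_getElem]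
  intro s i hs hi hsi
  obtain ⟨v, hv, hfresh, _⟩ := hl i hi (by omega)
  intro hEq
  apply hfresh
  have hmem : l[s] ∈ l.take i := by
    rw [List.mem_take_iff_getElem]
    exact ⟨s, by omega, rfl⟩
  have := mem_vertsL (l := l.take i) hmem
  exact this (by rw [hEq]; simpa [List.get_eq_getElem] using hv)

end Aux
section Theta
variable (a b : ℕ)

abbrev Bt := Fin 2 ⊕ (Fin a × Fin (b-1))
abbrev At := Bt a b ⊕ (Finset (Bt a b) × ℕ)

def uu : At a b := Sum.inl (Sum.inl 0)
def vv : At a b := Sum.inl (Sum.inl 1)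
def yy (i : Fin a) (j : ℕ) : At a b := Sum.inl (thetaVertex a b i j)
def Ee (i : Fin a) (j : ℕ) : Finset (Bt a b) :=
  {thetaVertex a b i j, thetaVertex a b i (j+1)}
def ww (i : Fin a) (j : ℕ) : At a b := Sum.inr (Ee a b i j, 0)
def Rr (i : Fin a) (j : ℕ) : Finset (At a b) := {yy a b i j, yy a b i (j+1), ww a b i j}
def cc (i : Fin a) : At a b := if (i:ℕ) = 0 then yy a b i 1 else uu a b
def Xe (i : Fin a) (j : ℕ) : Finset (At a b) := {cc a b i, yy a b i (j+1), yy a b i j}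
def lo (i : ℕ) : ℕ := if i = 0 then 2 else 1

variable {a b}

lemma tv_zero (i : Fin a) : thetaVertex a b i 0 = Sum.inl 0 := by simp [thetaVertex]

lemma tv_mid (hb : 2 ≤ b) (i : Fin a) {j : ℕ} (h1 : 1 ≤ j) (h2 : j ≤ b - 1) :
    thetaVertex a b i j = Sum.inr (i, ⟨j-1, by omega⟩) := by
  rw [thetaVertex, dif_neg (by omega), dif_pos (by omega)]

lemma tv_top (hb : 2 ≤ b) (i : Fin a) : thetaVertex a b i b = Sum.inl 1 := by
  rw [thetaVertex, dif_neg (by omega), dif_neg (by omega)]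

lemma tv_inj (hb : 2 ≤ b) {i i' : Fin a} {j j' : ℕ} (hj : j ≤ b) (hj' : j' ≤ b)
    (h : thetaVertex a b i j = thetaVertex a b i' j') :
    j = j' ∧ (j = 0 ∨ j = b ∨ i = i') := by
  have c1 : j = 0 ∨ (1 ≤ j ∧ j ≤ b - 1) ∨ j = b := by omega
  have c2 : j' = 0 ∨ (1 ≤ j' ∧ j' ≤ b - 1) ∨ j' = b := by omega
  rcases c1 with rfl | ⟨hj1, hj2⟩ | rfl <;> rcases c2 with rfl | ⟨hj1', hj2'⟩ | rfl
  · exact ⟨rfl, Or.inl rfl⟩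
  · rw [tv_zero, tv_mid hb i' hj1' hj2'] at h; simp at h
  · rw [tv_zero, tv_top hb] at h; simp at h
  · rw [tv_zero, tv_mid hb i hj1 hj2] at h; simp at h
  · rw [tv_mid hb i hj1 hj2, tv_mid hb i' hj1' hj2'] at h
    simp only [Sum.inr.injEq, Prod.mk.injEq, Fin.mk.injEq] at h
    exact ⟨by omega, Or.inr (Or.inr h.1)⟩
  · rw [tv_top hb, tv_mid hb i hj1 hj2] at h; simp at h
  · rw [tv_top hb, tv_zero] at h; simp at h
  · rw [tv_top hb, tv_mid hb i' hj1' hj2'] at h; simp at h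
  · exact ⟨rfl, Or.inr (Or.inl rfl)⟩

lemma yy_zero (i : Fin a) : yy a b i 0 = uu a b := by rw [yy, tv_zero]; rfl
lemma yy_top (hb : 2 ≤ b) (i : Fin a) : yy a b i b = vv a b := by rw [yy, tv_top hb]; rfl
lemma yy_mid (hb : 2 ≤ b) (i : Fin a) {j : ℕ} (h1 : 1 ≤ j) (h2 : j ≤ b - 1) :
    yy a b i j = Sum.inl (Sum.inr (i, ⟨j-1, by omega⟩)) := by rw [yy, tv_mid hb i h1 h2]

lemma uu_ne_vv : (uu a b) ≠ vv a b := by simp [uu, vv]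

lemma yy_inj (hb : 2 ≤ b) {i i' : Fin a} {j j' : ℕ} (hj : j ≤ b) (hj' : j' ≤ b)
    (h : yy a b i j = yy a b i' j') : j = j' ∧ (j = 0 ∨ j = b ∨ i = i') :=
  tv_inj hb hj hj' (by simpa [yy] using h)

lemma Ee_card (hb : 2 ≤ b) (i : Fin a) {j : ℕ} (hj : j < b) : (Ee a b i j).card = 2 := by
  rw [Ee, card_pair]
  intro h
  have := tv_inj hb (by omega) (by omega) h
  omega

lemma Ee_inj (hb : 2 ≤ b) {i i' : Fin a} {j j' : ℕ} (hj : j < b) (hj' : j' < b)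
    (h : Ee a b i j = Ee a b i' j') : i = i' ∧ j = j' := by
  rcases pair_eq_cases h with ⟨h1, h2⟩ | ⟨h1, h2⟩
  · have t1 := tv_inj hb (by omega) (by omega) h1
    have t2 := tv_inj hb (by omega) (by omega) h2
    rcases t2.2 with h0 | hbb | hii
    · omega
    · omega
    · exact ⟨hii, t1.1⟩
  · have t1 := tv_inj hb (by omega) (by omega) h1
    have t2 := tv_inj hb (by omega) (by omega) h2
    omega

lemma ww_inj (hb : 2 ≤ b) {i i' : Fin a} {j j' : ℕ} (hj : j < b) (hj' : j' < b)
    (h : ww a b i j = ww a b i' j') : i = i' ∧ j = j' := by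
  rw [ww, ww] at h
  simp only [Sum.inr.injEq, Prod.mk.injEq] at h
  exact Ee_inj hb hj hj' h.1

end Theta
section Build
variable (a b : ℕ)

def h1 (ha : 0 < a) : Finset (At a b) := {uu a b, vv a b, yy a b ⟨0, ha⟩ 1}

def Lx (i : Fin a) (m : ℕ) : List (Finset (At a b)) :=
  ((List.range' (b - m) m).reverse).map (Xe a b i)

def Rlp (i : Fin a) (m : ℕ) : List (Finset (At a b)) := (List.range m).map (Rr a b i)

def pl (i : Fin a) : List (Finset (At a b)) := Lx a b i (b - lo (i:ℕ)) ++ Rlp a b i b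

def pl' (i : ℕ) : List (Finset (At a b)) := if h : i < a then pl a b ⟨i, h⟩ else []

def LL (ha : 0 < a) (k : ℕ) : List (Finset (At a b)) :=
  h1 a b ha :: ((List.range k).map (pl' a b)).flatten

def P (i jx jr : ℕ) (z : At a b) : Prop :=
  z = uu a b ∨ z = vv a b ∨
  (∃ (i' : Fin a) (k : Fin (b-1)), z = Sum.inl (Sum.inr (i', k)) ∧
    ((i':ℕ) < i ∨ ((i':ℕ) = i ∧ jx ≤ (k:ℕ)+1) ∨ ((i':ℕ) = 0 ∧ (k:ℕ) = 0))) ∨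
  (∃ (i' : Fin a) (j' : ℕ), j' < b ∧ z = ww a b i' j' ∧
    ((i':ℕ) < i ∨ ((i':ℕ) = i ∧ j' < jr)))

variable {a b}

lemma P_mono {i jx jr jx' jr' : ℕ} (hx : jx' ≤ jx) (hr : jr ≤ jr') {z : At a b} :
    P a b i jx jr z → P a b i jx' jr' z := by
  rintro (h|h|⟨i',k,hz,hc⟩|⟨i',j',hj,hz,hc⟩)
  · exact Or.inl h
  · exact Or.inr (Or.inl h)
  · refine Or.inr (Or.inr (Or.inl ⟨i', k, hz, ?_⟩))
    rcases hc with h|⟨h1,h2⟩|h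
    · exact Or.inl h
    · exact Or.inr (Or.inl ⟨h1, by omega⟩)
    · exact Or.inr (Or.inr h)
  · refine Or.inr (Or.inr (Or.inr ⟨i', j', hj, hz, ?_⟩))
    rcases hc with h|⟨h1,h2⟩
    · exact Or.inl h
    · exact Or.inr ⟨h1, by omega⟩

lemma P_step {i : ℕ} {z : At a b} (h : P a b i 1 b z) : P a b (i+1) b 0 z := by
  rcases h with h|h|⟨i',k,hz,hc⟩|⟨i',j',hj,hz,hc⟩
  · exact Or.inl h
  · exact Or.inr (Or.inl h)
  · refine Or.inr (Or.inr (Or.inl ⟨i', k, hz, Or.inl (by omega)⟩))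
  · refine Or.inr (Or.inr (Or.inr ⟨i', j', hj, hz, Or.inl (by omega)⟩))

lemma fresh_y (hb : 2 ≤ b) {i : Fin a} {j : ℕ} (hj1 : lo (i:ℕ) ≤ j) (hj2 : j ≤ b-1) :
    ¬ P a b (i:ℕ) (j+1) 0 (yy a b i j) := by
  have hlo1 : 1 ≤ lo (i:ℕ) := by rw [lo]; split <;> omega
  rw [yy_mid hb i (by omega) hj2]
  rintro (h|h|⟨i',k,hz,hc⟩|⟨i',j',hj,hz,hc⟩)
  · simp [uu] at h
  · simp [vv] at h
  · simp only [Sum.inl.injEq, Sum.inr.injEq, Prod.mk.injEq] at hz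
    obtain ⟨hi', hk⟩ := hz
    have hkv : (k:ℕ) = j - 1 := by rw [← hk]
    have hiv : (i':ℕ) = (i:ℕ) := by rw [hi']
    rcases hc with h|⟨h1,h2⟩|⟨h1,h2⟩
    · omega
    · omega
    · have : lo (i:ℕ) = 2 := by rw [lo, if_pos (by omega)]
      omega
  · simp [ww] at hz

lemma fresh_w (hb : 2 ≤ b) {i : Fin a} {m : ℕ} (hm : m < b) :
    ¬ P a b (i:ℕ) 1 m (ww a b i m) := by
  rintro (h|h|⟨i',k,hz,hc⟩|⟨i',j',hj,hz,hc⟩)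
  · simp [ww, uu] at h
  · simp [ww, vv] at h
  · simp [ww] at hz
  · obtain ⟨hi', hj'⟩ := ww_inj hb hm hj hz
    have : (i':ℕ) = (i:ℕ) := by rw [hi']
    rcases hc with h|⟨h1,h2⟩ <;> omega

lemma Xe_elts {i : Fin a} {j : ℕ} {z : At a b} (hz : z ∈ Xe a b i j) :
    z = cc a b i ∨ z = yy a b i (j+1) ∨ z = yy a b i j := by simpa [Xe] using hz

lemma Rr_elts {i : Fin a} {j : ℕ} {z : At a b} (hz : z ∈ Rr a b i j) :
    z = yy a b i j ∨ z = yy a b i (j+1) ∨ z = ww a b i j := by simpa [Rr] using hz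

lemma cc_P (hb : 2 ≤ b) (ha : 0 < a) (i : Fin a) {jx jr : ℕ} : P a b (i:ℕ) jx jr (cc a b i) := by
  rw [cc]
  split
  · next h0 =>
    rw [yy_mid hb i (by omega) (by omega)]
    exact Or.inr (Or.inr (Or.inl ⟨i, ⟨0, by omega⟩, rfl, Or.inr (Or.inr ⟨h0, rfl⟩)⟩))
  · exact Or.inl rfl

lemma yy_P (hb : 2 ≤ b) {i : Fin a} {j jx jr : ℕ} (hj : j ≤ b) (hjx : jx ≤ j) (hj1 : 1 ≤ j) :
    P a b (i:ℕ) jx jr (yy a b i j) := by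
  rcases (by omega : j = b ∨ j ≤ b - 1) with rfl | hjb
  · rw [yy_top hb]; exact Or.inr (Or.inl rfl)
  · rw [yy_mid hb i hj1 hjb]
    exact Or.inr (Or.inr (Or.inl ⟨i, ⟨j-1, by omega⟩, rfl, Or.inr (Or.inl ⟨rfl, by simp; omega⟩)⟩))

lemma mem_Lx (hb : 1 ≤ b) {i : Fin a} {m j : ℕ} (hm : m ≤ b) (hj1 : b - m ≤ j)
    (hj2 : j ≤ b - 1) : Xe a b i j ∈ Lx a b i m :=
  List.mem_map.2 ⟨j, List.mem_reverse.2 (List.mem_range'_1.2 ⟨hj1, by omega⟩), rfl⟩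

lemma mem_Rlp {i : Fin a} {m j : ℕ} (hj : j < m) : Rr a b i j ∈ Rlp a b i m :=
  List.mem_map.2 ⟨j, List.mem_range.2 hj, rfl⟩

lemma Lx_succ {i : Fin a} {m : ℕ} (hm : m < b) :
    Lx a b i (m+1) = Lx a b i m ++ [Xe a b i (b - (m+1))] := by
  have h2 : List.range' (b-(m+1)) (m+1) = (b-(m+1)) :: List.range' (b-m) m := by
    have h3 : b-(m+1)+1 = b-m := by omega
    rw [List.range'_succ, h3]
  rw [Lx, h2, List.reverse_cons, List.map_append, Lx]
  rfl

lemma Rlp_succ {i : Fin a} {m : ℕ} :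
    Rlp a b i (m+1) = Rlp a b i m ++ [Rr a b i m] := by
  rw [Rlp, List.range_succ, List.map_append, Rlp]; rfl

lemma LL_succ (ha : 0 < a) (k : ℕ) :
    LL a b ha (k+1) = LL a b ha k ++ pl' a b k := by
  rw [LL, LL, List.range_succ, List.map_append, List.flatten_append]
  simp

lemma h1_card (hb : 2 ≤ b) (ha : 0 < a) : (h1 a b ha).card = 3 := by
  have h2 : yy a b ⟨0, ha⟩ 1 = Sum.inl (Sum.inr (⟨0,ha⟩, ⟨0, by omega⟩)) :=
    yy_mid hb _ (by omega) (by omega)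
  refine card3 uu_ne_vv ?_ ?_ <;> rw [h2] <;> simp [uu, vv]
lemma lo_ge1 (i : ℕ) : 1 ≤ lo i := by rw [lo]; split <;> omega
lemma lo_le2 (i : ℕ) : lo i ≤ 2 := by rw [lo]; split <;> omega

lemma xchain (hb : 2 ≤ b) (ha : 0 < a) (i : Fin a) (m : ℕ) (hm : m ≤ b - lo (i:ℕ))
    (l : List (Finset (At a b))) (hg : Good l) (hh1 : h1 a b ha ∈ l)
    (hv : ∀ z ∈ vertsL l, P a b (i:ℕ) b 0 z) :
    Good (l ++ Lx a b i m) ∧ ∀ z ∈ vertsL (l ++ Lx a b i m), P a b (i:ℕ) (b - m) 0 z := by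
  have hlo1 := lo_ge1 (i:ℕ)
  have hlo2 := lo_le2 (i:ℕ)
  revert hm
  induction m with
  | zero =>
    intro _
    exact ⟨by simpa [Lx] using hg, by simpa [Lx] using hv⟩
  | succ m ih =>
    intro hm
    obtain ⟨hg', hv'⟩ := ih (by omega)
    set j := b - (m+1) with hjdef
    have hj1 : lo (i:ℕ) ≤ j := by omega
    have hj2 : j ≤ b - 1 := by omega
    have hbm : b - m = j + 1 := by omega
    rw [Lx_succ (by omega), ← List.append_assoc]
    have hpair : ∃ f ∈ l ++ Lx a b i m, cc a b i ∈ f ∧ yy a b i (j+1) ∈ f := by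
      rcases Nat.eq_zero_or_pos m with rfl | hm1
      · refine ⟨h1 a b ha, List.mem_append_left _ hh1, ?_, ?_⟩
        · rw [cc]; split
          · next h0 =>
            have hieq : i = ⟨0, ha⟩ := Fin.ext h0
            rw [hieq, h1]; simp
          · rw [h1]; simp
        · have hjb : j + 1 = b := by omega
          rw [hjb, yy_top hb, h1]; simp
      · refine ⟨Xe a b i (j+1),
          List.mem_append_right _ (mem_Lx (by omega) (by omega) (by omega) (by omega)),
          by rw [Xe]; simp, by rw [Xe]; simp⟩
    obtain ⟨f, hfmem, hcf, hyf⟩ := hpair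
    constructor
    · refine good_snoc hg' (yy a b i j) (by rw [Xe]; exact Finset.mem_insert_of_mem (Finset.mem_insert_of_mem (Finset.mem_singleton_self _))) ?_ f hfmem ?_
      · intro hmem
        exact fresh_y hb hj1 hj2 (by have := hv' _ hmem; rwa [hbm] at this)
      · intro z hz
        obtain ⟨hzne, hzmem⟩ := Finset.mem_erase.1 hz
        rcases Xe_elts hzmem with rfl | rfl | rfl
        · exact hcf
        · exact hyf
        · exact absurd rfl hzne
    · intro z hz
      rw [vertsL_append] at hz
      rcases Finset.mem_union.1 hz with hz | hz
      · exact P_mono (by omega) le_rfl (hv' _ hz)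
      · have hz' : z ∈ Xe a b i j := by simpa [vertsL] using hz
        rcases Xe_elts hz' with rfl | rfl | rfl
        · exact cc_P hb ha i
        · exact yy_P hb (by omega) (by omega) (by omega)
        · exact yy_P hb (by omega) (by omega) (by omega)

lemma rchain (hb : 2 ≤ b) (ha : 0 < a) (i : Fin a) (m : ℕ) (hm : m ≤ b)
    (l : List (Finset (At a b))) (hg : Good l) (hh1 : h1 a b ha ∈ l)
    (hX : ∀ j, lo (i:ℕ) ≤ j → j ≤ b - 1 → Xe a b i j ∈ l)
    (hv : ∀ z ∈ vertsL l, P a b (i:ℕ) 1 0 z) :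
    Good (l ++ Rlp a b i m) ∧ ∀ z ∈ vertsL (l ++ Rlp a b i m), P a b (i:ℕ) 1 m z := by
  revert hm
  induction m with
  | zero =>
    intro _
    exact ⟨by simpa [Rlp] using hg, by simpa [Rlp] using hv⟩
  | succ m ih =>
    intro hm
    obtain ⟨hg', hv'⟩ := ih (by omega)
    rw [Rlp_succ, ← List.append_assoc]
    have hpair : ∃ f ∈ l ++ Rlp a b i m, yy a b i m ∈ f ∧ yy a b i (m+1) ∈ f := by
      by_cases h0 : (i:ℕ) = 0
      · have hieq : i = ⟨0, ha⟩ := Fin.ext h0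
        have hlo : lo (i:ℕ) = 2 := by rw [lo, if_pos h0]
        rcases (by omega : m = 0 ∨ (m = 1 ∧ b = 2) ∨ (m = 1 ∧ 3 ≤ b) ∨ 2 ≤ m) with
          rfl | ⟨rfl, hb2⟩ | ⟨rfl, hb3⟩ | h2
        · exact ⟨h1 a b ha, List.mem_append_left _ hh1,
            by rw [yy_zero, h1]; simp, by rw [hieq, h1]; simp⟩
        · refine ⟨h1 a b ha, List.mem_append_left _ hh1, by rw [hieq, h1]; simp, ?_⟩
          have : (1:ℕ) + 1 = b := by omega
          rw [this, yy_top hb, h1]; simp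
        · refine ⟨Xe a b i 2, List.mem_append_left _ (hX 2 (by omega) (by omega)), ?_, ?_⟩
          · rw [Xe, cc, if_pos h0]; simp
          · rw [Xe]; simp
        · exact ⟨Xe a b i m, List.mem_append_left _ (hX m (by omega) (by omega)),
            by rw [Xe]; simp, by rw [Xe]; simp⟩
      · have hlo : lo (i:ℕ) = 1 := by rw [lo, if_neg h0]
        rcases Nat.eq_zero_or_pos m with rfl | hm1
        · refine ⟨Xe a b i 1, List.mem_append_left _ (hX 1 (by omega) (by omega)), ?_,
            by rw [Xe]; simp⟩
          rw [yy_zero, Xe, cc, if_neg h0]; simp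
        · exact ⟨Xe a b i m, List.mem_append_left _ (hX m (by omega) (by omega)),
            by rw [Xe]; simp, by rw [Xe]; simp⟩
    obtain ⟨f, hfmem, hy1, hy2⟩ := hpair
    constructor
    · refine good_snoc hg' (ww a b i m) (by rw [Rr]; simp) ?_ f hfmem ?_
      · intro hmem
        exact fresh_w hb (by omega) (hv' _ hmem)
      · intro z hz
        obtain ⟨hzne, hzmem⟩ := Finset.mem_erase.1 hz
        rcases Rr_elts hzmem with rfl | rfl | rfl
        · exact hy1
        · exact hy2
        · exact absurd rfl hzne
    · intro z hz
      rw [vertsL_append] at hz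
      rcases Finset.mem_union.1 hz with hz | hz
      · exact P_mono le_rfl (by omega) (hv' _ hz)
      · have hz' : z ∈ Rr a b i m := by simpa [vertsL] using hz
        rcases Rr_elts hz' with rfl | rfl | rfl
        · rcases Nat.eq_zero_or_pos m with rfl | hm1
          · rw [yy_zero]; exact Or.inl rfl
          · exact yy_P hb (by omega) (by omega) hm1
        · exact yy_P hb (by omega) (by omega) (by omega)
        · exact Or.inr (Or.inr (Or.inr ⟨i, m, by omega, rfl, Or.inr ⟨rfl, by omega⟩⟩))

lemma path_step (hb : 2 ≤ b) (ha : 0 < a) (k : ℕ) (hk : k < a)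
    (hg : Good (LL a b ha k)) (hv : ∀ z ∈ vertsL (LL a b ha k), P a b k b 0 z) :
    Good (LL a b ha (k+1)) ∧ ∀ z ∈ vertsL (LL a b ha (k+1)), P a b (k+1) b 0 z := by
  set i : Fin a := ⟨k, hk⟩ with hidef
  have hik : (i:ℕ) = k := rfl
  have hh1 : h1 a b ha ∈ LL a b ha k := List.mem_cons_self
  have hlo1 := lo_ge1 (i:ℕ)
  have hlo2 := lo_le2 (i:ℕ)
  have hbl : b - (b - lo (i:ℕ)) = lo (i:ℕ) := by omega
  obtain ⟨hg1, hv1⟩ := xchain hb ha i (b - lo (i:ℕ)) le_rfl (LL a b ha k) hg hh1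
    (by rw [hik]; exact hv)
  have hv1' : ∀ z ∈ vertsL (LL a b ha k ++ Lx a b i (b - lo (i:ℕ))),
      P a b (i:ℕ) 1 0 z := by
    intro z hz
    have := hv1 z hz
    rw [hbl] at this
    exact P_mono (by omega) le_rfl this
  have hX : ∀ j, lo (i:ℕ) ≤ j → j ≤ b - 1 →
      Xe a b i j ∈ LL a b ha k ++ Lx a b i (b - lo (i:ℕ)) := by
    intro j hj1 hj2
    exact List.mem_append_right _ (mem_Lx (by omega) (by omega) (by omega) hj2)
  obtain ⟨hg2, hv2⟩ := rchain hb ha i b le_rfl _ hg1 (List.mem_append_left _ hh1) hX hv1'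
  have hLL : LL a b ha (k+1) = (LL a b ha k ++ Lx a b i (b - lo (i:ℕ))) ++ Rlp a b i b := by
    rw [LL_succ, pl', dif_pos hk, pl, List.append_assoc]
  rw [hLL]
  refine ⟨hg2, fun z hz => ?_⟩
  have := hv2 z hz
  rw [hik] at this
  exact P_step this

lemma main_good (hb : 2 ≤ b) (ha : 0 < a) :
    ∀ k, k ≤ a → Good (LL a b ha k) ∧ ∀ z ∈ vertsL (LL a b ha k), P a b k b 0 z := by
  intro k
  induction k with
  | zero =>
    intro _
    have hLL0 : LL a b ha 0 = [h1 a b ha] := by rw [LL]; simp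
    constructor
    · rw [hLL0]; exact good_singleton _
    · intro z hz
      rw [hLL0] at hz
      have hz' : z ∈ h1 a b ha := by simpa [vertsL] using hz
      rw [h1] at hz'
      simp only [Finset.mem_insert, Finset.mem_singleton] at hz'
      rcases hz' with rfl | rfl | rfl
      · exact Or.inl rfl
      · exact Or.inr (Or.inl rfl)
      · rw [yy_mid hb _ (by omega) (by omega)]
        exact Or.inr (Or.inr (Or.inl ⟨⟨0,ha⟩, ⟨0, by omega⟩, rfl, Or.inr (Or.inr ⟨rfl, rfl⟩)⟩))
  | succ k ih =>
    intro hk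
    obtain ⟨hg, hv⟩ := ih (by omega)
    exact path_step hb ha k (by omega) hg hv
instance instDecEqFinsetAt : DecidableEq (Finset (At a b)) := Finset.decidableEq

lemma theta_mem {e : Finset (Bt a b)} :
    e ∈ thetaGraph a b ↔ ∃ (i : Fin a) (j : ℕ), j < b ∧ e = Ee a b i j := by
  rw [thetaGraph, Finset.mem_image]
  constructor
  · rintro ⟨p, hp, rfl⟩
    exact ⟨p.1, p.2, Finset.mem_range.1 (Finset.mem_product.1 hp).2, rfl⟩
  · rintro ⟨i, j, hj, rfl⟩
    exact ⟨(i, j), Finset.mem_product.2 ⟨Finset.mem_univ _, Finset.mem_range.2 hj⟩, rfl⟩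

lemma expand_Ee (hb : 2 ≤ b) {i : Fin a} {j : ℕ} (hj : j < b) :
    (Ee a b i j).image Sum.inl ∪
      (Finset.range (3 - (Ee a b i j).card)).image (fun k => Sum.inr (Ee a b i j, k)) =
    Rr a b i j := by
  rw [Ee_card hb i hj]
  ext z
  simp only [Ee, Rr, yy, ww, Finset.mem_union, Finset.mem_image, Finset.mem_insert,
    Finset.mem_singleton, Finset.mem_range]
  constructor
  · rintro (⟨x, hx, rfl⟩ | ⟨k, hk, rfl⟩)
    · rcases hx with rfl | rfl
      · exact Or.inl rfl
      · exact Or.inr (Or.inl rfl)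
    · have : k = 0 := by omega
      subst this
      exact Or.inr (Or.inr rfl)
  · rintro (rfl | rfl | rfl)
    · exact Or.inl ⟨_, Or.inl rfl, rfl⟩
    · exact Or.inl ⟨_, Or.inr rfl, rfl⟩
    · exact Or.inr ⟨0, by omega, rfl⟩

lemma expansion_mem (hb : 2 ≤ b) {e : Finset (At a b)} :
    e ∈ expansion 3 (thetaGraph a b) ↔ ∃ (i : Fin a) (j : ℕ), j < b ∧ e = Rr a b i j := by
  rw [expansion, Finset.mem_image]
  constructor
  · rintro ⟨e0, he0, rfl⟩
    obtain ⟨i, j, hj, rfl⟩ := theta_mem.1 he0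
    exact ⟨i, j, hj, expand_Ee hb hj⟩
  · rintro ⟨i, j, hj, rfl⟩
    exact ⟨Ee a b i j, theta_mem.2 ⟨i, j, hj, rfl⟩, expand_Ee hb hj⟩

lemma Rr_mem_LL (ha : 0 < a) (i : Fin a) {j : ℕ} (hj : j < b) :
    Rr a b i j ∈ LL a b ha a := by
  rw [LL]
  refine List.mem_cons_of_mem _ (List.mem_flatten.2 ⟨pl' a b (i:ℕ),
    List.mem_map.2 ⟨(i:ℕ), List.mem_range.2 i.isLt, rfl⟩, ?_⟩)
  rw [pl', dif_pos i.isLt]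
  have hieq : (⟨(i:ℕ), i.isLt⟩ : Fin a) = i := Fin.ext rfl
  rw [hieq, pl]
  exact List.mem_append_right _ (mem_Rlp hj)

lemma mem_LL_cases (hb : 2 ≤ b) (ha : 0 < a) {e : Finset (At a b)} (he : e ∈ LL a b ha a) :
    e = h1 a b ha ∨ ∃ i : Fin a,
      (∃ j, lo (i:ℕ) ≤ j ∧ j ≤ b - 1 ∧ e = Xe a b i j) ∨ (∃ j, j < b ∧ e = Rr a b i j) := by
  rw [LL] at he
  rcases List.mem_cons.1 he with rfl | he
  · exact Or.inl rfl
  · right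
    obtain ⟨l', hl', hel⟩ := List.mem_flatten.1 he
    obtain ⟨kk, hkk, rfl⟩ := List.mem_map.1 hl'
    rw [List.mem_range] at hkk
    rw [pl', dif_pos hkk] at hel
    refine ⟨⟨kk, hkk⟩, ?_⟩
    rw [pl] at hel
    have hlo1 := lo_ge1 kk
    have hlo2 := lo_le2 kk
    rcases List.mem_append.1 hel with h | h
    · left
      obtain ⟨j, hjmem, rfl⟩ := List.mem_map.1 h
      rw [List.mem_reverse, List.mem_range'_1] at hjmem
      exact ⟨j, by omega, by omega, rfl⟩
    · right
      obtain ⟨j, hjmem, rfl⟩ := List.mem_map.1 h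
      exact ⟨j, List.mem_range.1 hjmem, rfl⟩

lemma Xe_card (hb : 2 ≤ b) {i : Fin a} {j : ℕ} (hj1 : lo (i:ℕ) ≤ j) (hj2 : j ≤ b - 1) :
    (Xe a b i j).card = 3 := by
  have hlo1 := lo_ge1 (i:ℕ)
  rw [Xe]
  have hne1 : cc a b i ≠ yy a b i (j+1) := by
    rw [cc]; split
    · next h0 =>
      intro h
      have hlo : lo (i:ℕ) = 2 := by rw [lo, if_pos h0]
      have := yy_inj hb (by omega) (by omega) h
      omega
    · next h0 =>
      rw [← yy_zero i]
      intro h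
      have := yy_inj hb (by omega) (by omega) h
      omega
  have hne2 : cc a b i ≠ yy a b i j := by
    rw [cc]; split
    · next h0 =>
      intro h
      have hlo : lo (i:ℕ) = 2 := by rw [lo, if_pos h0]
      have := yy_inj hb (by omega) (by omega) h
      omega
    · next h0 =>
      rw [← yy_zero i]
      intro h
      have := yy_inj hb (by omega) (by omega) h
      omega
  have hne3 : yy a b i (j+1) ≠ yy a b i j := by
    intro h
    have := yy_inj hb (by omega) (by omega) h
    omega
  exact card3 hne1 hne2 hne3

lemma Rr_card (hb : 2 ≤ b) {i : Fin a} {j : ℕ} (hj : j < b) : (Rr a b i j).card = 3 := by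
  rw [Rr]
  refine card3 ?_ ?_ ?_
  · intro h
    have := yy_inj hb (by omega) (by omega) h
    omega
  · rw [yy]; simp [ww]
  · rw [yy]; simp [ww]

lemma mem_verts_F (hb : 2 ≤ b) {z : At a b} (i : Fin a) (j : ℕ) (hj : j < b)
    (hz : z ∈ Rr a b i j) : z ∈ verts (expansion 3 (thetaGraph a b)) := by
  rw [verts, Finset.mem_sup]
  exact ⟨Rr a b i j, (expansion_mem hb).2 ⟨i, j, hj, rfl⟩, hz⟩

lemma yy_mem_verts (hb : 2 ≤ b) (i : Fin a) {j : ℕ} (hj : j ≤ b) :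
    yy a b i j ∈ verts (expansion 3 (thetaGraph a b)) := by
  rcases Nat.lt_or_ge j b with h | h
  · exact mem_verts_F hb i j h (by rw [Rr]; simp)
  · have hjb : j = b := by omega
    subst hjb
    refine mem_verts_F hb i (j-1) (by omega) ?_
    rw [Rr]
    have : j - 1 + 1 = j := by omega
    rw [this]
    simp
end Build

/-- `θ_{a,b}^{(3)}` is a spanning subgraph of a tight 3-tree. -/
theorem stmt_17 (a b : ℕ) (ha : 2 ≤ a) (hb : 2 ≤ b) :
    IsSpanningSubgraphOfTightTree 3 (expansion 3 (thetaGraph a b)) := by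
  have ha0 : 0 < a := by omega
  obtain ⟨hg, hv⟩ := main_good (a := a) (b := b) hb ha0 a le_rfl
  have hsub : expansion 3 (thetaGraph a b) ⊆ (LL a b ha0 a).toFinset := by
    intro e he
    rw [List.mem_toFinset]
    obtain ⟨i, j, hj, rfl⟩ := (expansion_mem hb).1 he
    exact Rr_mem_LL ha0 i hj
  refine ⟨(LL a b ha0 a).toFinset, ⟨?_, LL a b ha0 a, good_nodup hg, rfl, hg⟩, ?_, ?_⟩
  · -- uniformity
    intro e he
    rw [List.mem_toFinset] at he
    rcases mem_LL_cases hb ha0 he with rfl | ⟨i, ⟨j, hj1, hj2, rfl⟩ | ⟨j, hj, rfl⟩⟩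
    · exact h1_card hb ha0
    · exact Xe_card hb hj1 hj2
    · exact Rr_card hb hj
  · exact hsub
  · -- verts equality
    apply Finset.Subset.antisymm
    · intro z hz
      rw [verts, Finset.mem_sup] at hz
      obtain ⟨e, he, hz⟩ := hz
      rw [List.mem_toFinset] at he
      revert hz
      revert z
      show ∀ z ∈ e, z ∈ verts (expansion 3 (thetaGraph a b))
      rcases mem_LL_cases hb ha0 he with rfl | ⟨i, ⟨j, hj1, hj2, rfl⟩ | ⟨j, hj, rfl⟩⟩
      · intro z hz
        rw [h1] at hz
        simp only [Finset.mem_insert, Finset.mem_singleton] at hz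
        rcases hz with rfl | rfl | rfl
        · rw [← yy_zero (⟨0, ha0⟩ : Fin a)]
          exact yy_mem_verts hb _ (by omega)
        · rw [← yy_top hb (⟨0, ha0⟩ : Fin a)]
          exact yy_mem_verts hb _ le_rfl
        · exact yy_mem_verts hb _ (by omega)
      · intro z hz
        rcases Xe_elts hz with rfl | rfl | rfl
        · rw [cc]
          split
          · exact yy_mem_verts hb _ (by omega)
          · rw [← yy_zero i]
            exact yy_mem_verts hb _ (by omega)
        · exact yy_mem_verts hb _ (by omega)
        · exact yy_mem_verts hb _ (by omega)
      · intro z hz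
        exact mem_verts_F hb i j hj hz
    · intro z hz
      rw [verts, Finset.mem_sup] at hz
      obtain ⟨e, he, hz⟩ := hz
      rw [verts, Finset.mem_sup]
      exact ⟨e, hsub he, hz⟩
end
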